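/- arXiv:1709.07339 — 7 statements merged into one kernel-verified Lean document; each statement's English description precedes it below -/
import Mathlib

section
/- Let T be an effect-increasing statistic and suppose the true schedule S_h satisfies τ_i ≤ τ⁰_i for all i. Let p̃ = P(T(W*, S̃) ≥ t_obs) be the nominal permutation p-value computed from the schedule S̃ imputed under the sharp null τ = τ⁰, where t_obs = T(w_obs, S_h), and let p = P(T(W*, S_h) ≥ t_obs) be the true p-value. Then p̃ ≥ p pointwise (for every realized w_obs), and hence for any α ∈ [0,1], if P(p ≤ α) ≤ α then P(p̃ ≤ α) ≤ α: rejecting when p̃ ≤ α is a valid (conservative) level-α test of the bounded null. -/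
/-!
Whatever the realized assignment, the bound `τ ≤ τ⁰` makes the imputed schedule dominate the
true one in the effect order: it raises every treated outcome and lowers every control outcome.
An effect-increasing statistic is therefore at least as large on the imputed schedule under every
re-randomization, so each tail event of the true statistic is contained in the corresponding
imputed one and `p ≤ p̃`. Consequently `{p̃ ≤ α} ⊆ {p ≤ α}`, and the level carries over.
-/

def EffectIncreasing {n : ℕ}
    (T : (Fin n → Bool) → (Fin n → ℝ) → (Fin n → ℝ) → ℝ) : Prop :=
  ∀ (w : Fin n → Bool) (Y0 Y1 Y0' Y1' : Fin n → ℝ),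
    (∀ i, Y1 i ≤ Y1' i) → (∀ i, Y0' i ≤ Y0 i) →
    T w Y0 Y1 ≤ T w Y0' Y1'

lemma Finset.sum_ite_le_sum_ite_of_imp {ι M : Type*} [AddCommMonoid M] [PartialOrder M]
    [IsOrderedAddMonoid M] (s : Finset ι) {f : ι → M} (hf : ∀ i ∈ s, 0 ≤ f i)
    {P Q : ι → Prop} [DecidablePred P] [DecidablePred Q] (hPQ : ∀ i ∈ s, P i → Q i) :
    ∑ i ∈ s, (if P i then f i else 0) ≤ ∑ i ∈ s, if Q i then f i else 0 := by
  refine Finset.sum_le_sum fun i hi => ?_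
  by_cases hP : P i
  · simp only [hP, hPQ i hi hP, if_true, le_refl]
  · rw [if_neg hP]
    split_ifs
    exacts [hf i hi, le_rfl]

lemma le_imputed_treated (b : Bool) {y0 y1 τ : ℝ} (h : y1 - y0 ≤ τ) :
    y1 ≤ (if b then y1 else y0) + (if b then 0 else τ) := by
  cases b <;> simp only [Bool.false_eq_true, if_true, if_false] <;> linarith

lemma imputed_control_le (b : Bool) {y0 y1 τ : ℝ} (h : y1 - y0 ≤ τ) :
    (if b then y1 else y0) - (if b then τ else 0) ≤ y0 := by
  cases b <;> simp only [Bool.false_eq_true, if_true, if_false] <;> linarith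

open Classical in
theorem conservative_test_of_bounded_null_general {n : ℕ}
    (T : (Fin n → Bool) → (Fin n → ℝ) → (Fin n → ℝ) → ℝ)
    (hT : EffectIncreasing T)
    (pr : (Fin n → Bool) → ℝ)
    (hpr : ∀ w, 0 ≤ pr w)
    (Y0 Y1 : Fin n → ℝ) (τ0 : Fin n → ℝ)
    (hbound : ∀ i, Y1 i - Y0 i ≤ τ0 i)
    -- imputed schedule as a function of the realized assignment
    (impY0 impY1 : (Fin n → Bool) → (Fin n → ℝ))
    (himp0 : ∀ wobs i, impY0 wobs i = (if wobs i then Y1 i else Y0 i) - (if wobs i then τ0 i else 0))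
    (himp1 : ∀ wobs i, impY1 wobs i = (if wobs i then Y1 i else Y0 i) + (if wobs i then 0 else τ0 i))
    -- nominal and true p-values as functions of the realized assignment
    (ptil p : (Fin n → Bool) → ℝ)
    (hptil : ∀ wobs, ptil wobs =
      ∑ w : Fin n → Bool, if T wobs Y0 Y1 ≤ T w (impY0 wobs) (impY1 wobs) then pr w else 0)
    (hp : ∀ wobs, p wobs =
      ∑ w : Fin n → Bool, if T wobs Y0 Y1 ≤ T w Y0 Y1 then pr w else 0) :
    (∀ wobs, p wobs ≤ ptil wobs) ∧
    (∀ α : ℝ, 0 ≤ α → α ≤ 1 →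
      (∑ wobs : Fin n → Bool, if p wobs ≤ α then pr wobs else 0) ≤ α →
      (∑ wobs : Fin n → Bool, if ptil wobs ≤ α then pr wobs else 0) ≤ α) := by
  have imputed_dominates : ∀ wobs w, T w Y0 Y1 ≤ T w (impY0 wobs) (impY1 wobs) :=
    fun wobs w => hT w _ _ _ _
      (fun i => (himp1 wobs i).symm ▸ le_imputed_treated (wobs i) (hbound i))
      (fun i => (himp0 wobs i).symm ▸ imputed_control_le (wobs i) (hbound i))
  have p_le_ptil : ∀ wobs, p wobs ≤ ptil wobs := fun wobs => by
    rw [hp, hptil]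
    exact Finset.sum_ite_le_sum_ite_of_imp _ (fun w _ => hpr w)
      fun w _ h => h.trans (imputed_dominates wobs w)
  refine ⟨p_le_ptil, fun α _ _ hα => le_trans ?_ hα⟩
  exact Finset.sum_ite_le_sum_ite_of_imp _ (fun w _ => hpr w) fun w _ h => (p_le_ptil w).trans h

open Classical in
/-- with an effect-increasing statistic and a true schedule
satisfying τ_i ≤ τ⁰_i, the nominal p-value p̃ (computed from the schedule
imputed under the sharp null τ = τ⁰) dominates the true p-value p pointwise
in the realized assignment, and consequently if rejecting when p ≤ α has
probability at most α then so does rejecting when p̃ ≤ α. -/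
theorem conservative_test_of_bounded_null {n : ℕ}
    (T : (Fin n → Bool) → (Fin n → ℝ) → (Fin n → ℝ) → ℝ)
    (hT : EffectIncreasing T)
    (pr : (Fin n → Bool) → ℝ)
    (hpr : ∀ w, 0 ≤ pr w) (hsum : ∑ w, pr w = 1)
    (Y0 Y1 : Fin n → ℝ) (τ0 : Fin n → ℝ)
    (hbound : ∀ i, Y1 i - Y0 i ≤ τ0 i)
    -- imputed schedule as a function of the realized assignment
    (impY0 impY1 : (Fin n → Bool) → (Fin n → ℝ))
    (himp0 : ∀ wobs i, impY0 wobs i = (if wobs i then Y1 i else Y0 i) - (if wobs i then τ0 i else 0))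
    (himp1 : ∀ wobs i, impY1 wobs i = (if wobs i then Y1 i else Y0 i) + (if wobs i then 0 else τ0 i))
    -- nominal and true p-values as functions of the realized assignment
    (ptil p : (Fin n → Bool) → ℝ)
    (hptil : ∀ wobs, ptil wobs =
      ∑ w : Fin n → Bool, if T wobs Y0 Y1 ≤ T w (impY0 wobs) (impY1 wobs) then pr w else 0)
    (hp : ∀ wobs, p wobs =
      ∑ w : Fin n → Bool, if T wobs Y0 Y1 ≤ T w Y0 Y1 then pr w else 0) :
    (∀ wobs, p wobs ≤ ptil wobs) ∧
    (∀ α : ℝ, 0 ≤ α → α ≤ 1 →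
      (∑ wobs : Fin n → Bool, if p wobs ≤ α then pr wobs else 0) ≤ α →
      (∑ wobs : Fin n → Bool, if ptil wobs ≤ α then pr wobs else 0) ≤ α) :=
  conservative_test_of_bounded_null_general T hT pr hpr Y0 Y1 τ0 hbound impY0 impY1 himp0 himp1 ptil
    p hptil hp
end

section
/- For an effect-increasing test statistic, the one-sided permutation p-value under the sharp null of a constant effect is monotone non-increasing in the hypothesized constant: if τ¹ ≤ τ² are real numbers and p(τ) denotes the permutation p-value P(T(W*, S̃_τ) ≥ t_obs) computed from the schedule imputed under the constant-effect sharp null τ_i = τ for all i, then p(τ¹) ≤ p(τ²). -/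
section Imputation

variable {ι : Type*} (w : ι → Bool) (y : ι → ℝ)

def imputedControl (τ : ℝ) : ι → ℝ := fun i => y i - if w i then τ else 0

def imputedTreated (τ : ℝ) : ι → ℝ := fun i => y i + if w i then 0 else τ

theorem imputedControl_antitone : Antitone (imputedControl w y) := by
  intro τ₁ τ₂ h i
  unfold imputedControl
  split <;> linarith

theorem imputedTreated_monotone : Monotone (imputedTreated w y) := by
  intro τ₁ τ₂ h i
  unfold imputedTreated
  split <;> linarith

end Imputation

theorem EffectIncreasing.monotone_imputed {n : ℕ}
    {T : (Fin n → Bool) → (Fin n → ℝ) → (Fin n → ℝ) → ℝ} (hT : EffectIncreasing T)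
    (w wobs : Fin n → Bool) (yobs : Fin n → ℝ) :
    Monotone fun τ => T w (imputedControl wobs yobs τ) (imputedTreated wobs yobs τ) :=
  fun _ _ h => hT w _ _ _ _ (imputedTreated_monotone wobs yobs h)
    (imputedControl_antitone wobs yobs h)

theorem ite_zero_le_ite_zero_of_imp {M : Type*} [Zero M] [Preorder M] {p q : Prop}
    [Decidable p] [Decidable q] (hpq : p → q) {c : M} (hc : 0 ≤ c) :
    (if p then c else 0) ≤ (if q then c else 0) := by
  split_ifs with hp hq
  exacts [le_rfl, absurd (hpq hp) hq, hc, le_rfl]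

theorem monotone_sum_ite_le {ι α β M : Type*} [Preorder α] [Preorder β] [AddCommMonoid M]
    [PartialOrder M] [IsOrderedAddMonoid M] (s : Finset ι) {f : ι → α → β}
    (hf : ∀ i, Monotone (f i)) {c : ι → M} (hc : ∀ i, 0 ≤ c i) (t : β)
    [∀ i a, Decidable (t ≤ f i a)] :
    Monotone fun a => ∑ i ∈ s, if t ≤ f i a then c i else 0 :=
  fun _ _ h => Finset.sum_le_sum fun i _ =>
    ite_zero_le_ite_zero_of_imp (fun ht => ht.trans (hf i h)) (hc i)

open Classical in
/-- for an effect-increasing statistic, the one-sided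
permutation p-value under the constant-effect sharp null τ_i = τ ∀i is
monotone non-increasing in the hypothesized constant τ (i.e., non-decreasing
as a function of τ in the direction of the ordering: τ¹ ≤ τ² ⇒ p(τ¹) ≤ p(τ²)). -/
theorem constant_effect_p_value_monotone {n : ℕ}
    (T : (Fin n → Bool) → (Fin n → ℝ) → (Fin n → ℝ) → ℝ)
    (hT : EffectIncreasing T)
    (pr : (Fin n → Bool) → ℝ) (hpr : ∀ w, 0 ≤ pr w)
    (wobs : Fin n → Bool) (yobs : Fin n → ℝ) (tobs : ℝ)
    (p : ℝ → ℝ)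
    (hpdef : ∀ τ : ℝ, p τ =
      ∑ w : Fin n → Bool,
        if tobs ≤ T w (fun i => yobs i - (if wobs i then τ else 0))
                      (fun i => yobs i + (if wobs i then 0 else τ))
        then pr w else 0) :
    ∀ τ1 τ2 : ℝ, τ1 ≤ τ2 → p τ1 ≤ p τ2 := by
  intro τ1 τ2 h
  rw [hpdef, hpdef]
  exact monotone_sum_ite_le Finset.univ (hT.monotone_imputed · wobs yobs) hpr tobs h
end

section
/- For continuous (tie-free) outcomes, any rank statistic of the form T(w, Y) = a(w)·Σ_i w_i Q(R_i) − b(w)·Σ_i (1−w_i) Q(R_i), where R_i is the rank of the observed outcome Y_i among all n observed outcomes, Q is non-decreasing, and a(w), b(w) ≥ 0, is effect-increasing: if S ⪯ S' and all observed outcomes within each schedule are distinct, then T(w, S) ≤ T(w, S') for every assignment vector w. -/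
/-!
Call the units with `w i` treated. Raising treated outcomes and lowering control outcomes can
only push treated units up the ranking: for every `k`, at most as many treated units have rank
`≤ k` afterwards as before. For monotone `Q` this dominance gives monotonicity of the treated sum
`∑ Q (R i)`, by writing `Q r` as `Q 0` plus the increments of `Q` below `r`. For tie-free
outcomes the ranks of all units are a permutation of `1, …, n`, so the control sum is a constant
minus the treated sum and moves the other way.
-/

open Finset

/-- The rank of observed outcome `Yobs i` among all observed outcomes:
the number of units j with Yobs j ≤ Yobs i. With distinct outcomes this is
the position in the increasing ordering. -/
noncomputable def rankOf {n : ℕ} (Yobs : Fin n → ℝ) (i : Fin n) : ℕ :=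
  (univ.filter (fun j => Yobs j ≤ Yobs i)).card

section Rank

variable {ι α : Type*} [LinearOrder α] {s : Finset ι} {Y : ι → α} {i j : ι}

-- `rankOf Y` is `rankIn univ Y` by definition.
def rankIn (s : Finset ι) (Y : ι → α) (i : ι) : ℕ := #{j ∈ s | Y j ≤ Y i}

theorem rankIn_lt_rankIn (hj : j ∈ s) (h : Y i < Y j) : rankIn s Y i < rankIn s Y j := by
  refine card_lt_card <| (ssubset_iff_of_subset ?_).2 ⟨j, ?_, ?_⟩
  · exact monotone_filter_right s fun _ _ hk => hk.trans h.le
  · simp [hj]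
  · simp [h]

theorem rankIn_pos (hi : i ∈ s) : 0 < rankIn s Y i :=
  card_pos.2 ⟨i, mem_filter.2 ⟨hi, le_rfl⟩⟩

theorem rankIn_le_card : rankIn s Y i ≤ #s := card_filter_le _ _

theorem injOn_rankIn (hY : Set.InjOn Y s) : Set.InjOn (rankIn s Y) s := by
  intro i hi j hj h
  rcases lt_trichotomy (Y i) (Y j) with hlt | heq | hgt
  · exact absurd h (rankIn_lt_rankIn hj hlt).ne
  · exact hY hi hj heq
  · exact absurd h (rankIn_lt_rankIn hi hgt).ne'

theorem image_rankIn (hY : Set.InjOn Y s) : s.image (rankIn s Y) = Icc 1 #s := by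
  refine eq_of_subset_of_card_le ?_ ?_
  · intro r hr
    obtain ⟨i, hi, rfl⟩ := mem_image.1 hr
    exact mem_Icc.2 ⟨rankIn_pos hi, rankIn_le_card⟩
  · rw [card_image_of_injOn (injOn_rankIn hY), Nat.card_Icc, Nat.add_sub_cancel]

theorem card_filter_rankIn_le_eq (hY : Set.InjOn Y s) {m : ℕ} (hm : m ≤ #s) :
    #{i ∈ s | rankIn s Y i ≤ m} = m := by
  rw [← card_image_of_injOn ((injOn_rankIn hY).mono (filter_subset _ _)),
    ← filter_image (p := (· ≤ m)), image_rankIn hY]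
  have : {r ∈ Icc 1 #s | r ≤ m} = Icc 1 m := by ext; simp only [mem_filter, mem_Icc]; omega
  rw [this, Nat.card_Icc, Nat.add_sub_cancel]

theorem sum_comp_rankIn {M : Type*} [AddCommMonoid M] (Q : ℕ → M) (hY : Set.InjOn Y s) :
    ∑ i ∈ s, Q (rankIn s Y i) = ∑ r ∈ Icc 1 #s, Q r := by
  rw [← image_rankIn hY, sum_image (injOn_rankIn hY)]

theorem rankIn_univ_eq_add [Fintype ι] [DecidableEq ι] (t : Finset ι) :
    rankIn univ Y i = rankIn t Y i + rankIn tᶜ Y i := by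
  rw [rankIn, ← union_compl t, filter_union,
    card_union_of_disjoint (disjoint_compl_right.mono (filter_subset _ _) (filter_subset _ _))]
  rfl

end Rank

section Dominance

variable {ι M : Type*} [AddCommGroup M]

theorem apply_eq_add_sum_range_ite (Q : ℕ → M) {r N : ℕ} (hr : r ≤ N) :
    Q r = Q 0 + ∑ t ∈ range N, if t < r then Q (t + 1) - Q t else 0 := by
  rw [← sum_filter, show {t ∈ range N | t < r} = range r by ext; simp; omega,
    sum_range_sub, add_sub_cancel]

theorem sum_comp_eq_add_sum_range (Q : ℕ → M) (s : Finset ι) {r : ι → ℕ} {N : ℕ}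
    (hr : ∀ i ∈ s, r i ≤ N) :
    ∑ i ∈ s, Q (r i) =
      #s • Q 0 + ∑ t ∈ range N, #{i ∈ s | t < r i} • (Q (t + 1) - Q t) := by
  rw [sum_congr rfl fun i hi => apply_eq_add_sum_range_ite Q (hr i hi), sum_add_distrib,
    sum_const, sum_comm]
  congr 1
  refine sum_congr rfl fun t _ => ?_
  rw [← sum_filter, sum_const]

theorem sum_comp_le_sum_comp_of_card_filter_le [PartialOrder M] [IsOrderedAddMonoid M]
    {Q : ℕ → M} (hQ : Monotone Q) {s : Finset ι} {r r' : ι → ℕ}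
    (h : ∀ k, #{i ∈ s | r' i ≤ k} ≤ #{i ∈ s | r i ≤ k}) :
    ∑ i ∈ s, Q (r i) ≤ ∑ i ∈ s, Q (r' i) := by
  set N := s.sup r ⊔ s.sup r'
  rw [sum_comp_eq_add_sum_range Q s (N := N) fun i hi => le_sup_of_le_left (le_sup hi),
    sum_comp_eq_add_sum_range Q s (N := N) fun i hi => le_sup_of_le_right (le_sup hi)]
  refine add_le_add le_rfl <| sum_le_sum fun t _ =>
    nsmul_le_nsmul_left (sub_nonneg.2 (hQ t.le_succ)) ?_
  have hrt := card_filter_add_card_filter_not (s := s) (fun i => r i ≤ t)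
  have hr't := card_filter_add_card_filter_not (s := s) (fun i => r' i ≤ t)
  simp only [not_le] at hrt hr't
  have := h t
  omega

end Dominance

section Shift

variable {ι α : Type*} [Fintype ι] [DecidableEq ι] [LinearOrder α] {T : Finset ι}
  {Y Y' : ι → α}

theorem card_filter_rankIn_le_of_shift (hY : Set.InjOn Y T) (hT : ∀ i ∈ T, Y i ≤ Y' i)
    (hC : ∀ i ∉ T, Y' i ≤ Y i) (k : ℕ) :
    #{i ∈ T | rankIn univ Y' i ≤ k} ≤ #{i ∈ T | rankIn univ Y i ≤ k} := by
  set A := {i ∈ T | rankIn univ Y' i ≤ k}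
  obtain hA | hA := A.eq_empty_or_nonempty
  · simp [hA]
  -- The `#A` treated units of lowest `Y`-rank all lie below `Y' i₀`, and so have rank `≤ k`.
  obtain ⟨i₀, hi₀, hmax⟩ := A.exists_max_image Y' hA
  have hi₀k : rankIn univ Y' i₀ ≤ k := (mem_filter.1 hi₀).2
  have hAi₀ : #A ≤ rankIn T Y' i₀ :=
    card_le_card <| monotone_filter_right T fun i hi _ => hmax i (mem_filter.2 ⟨hi, ‹_›⟩)
  calc #A = #{i ∈ T | rankIn T Y i ≤ #A} :=
        (card_filter_rankIn_le_eq hY (card_le_card (filter_subset _ _))).symm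
    _ ≤ #{i ∈ T | rankIn univ Y i ≤ k} :=
        card_le_card <| monotone_filter_right T fun i hi hiA => ?_
  have hYi : Y i ≤ Y' i₀ := by
    by_contra! hlt
    have : rankIn T Y' i₀ < rankIn T Y i := by
      refine card_lt_card <| (ssubset_iff_of_subset ?_).2 ⟨i, mem_filter.2 ⟨hi, le_rfl⟩, ?_⟩
      · exact monotone_filter_right T fun j hj hji => ((hT j hj).trans hji).trans hlt.le
      · simpa using fun _ => hlt.trans_le (hT i hi)
    omega
  have hCi : rankIn Tᶜ Y i ≤ rankIn Tᶜ Y' i₀ :=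
    card_le_card <| monotone_filter_right _ fun j hj hji =>
      (hC j (mem_compl.1 hj)).trans (hji.trans hYi)
  calc rankIn univ Y i = rankIn T Y i + rankIn Tᶜ Y i := rankIn_univ_eq_add T
    _ ≤ rankIn T Y' i₀ + rankIn Tᶜ Y' i₀ := by omega
    _ = rankIn univ Y' i₀ := (rankIn_univ_eq_add T).symm
    _ ≤ k := hi₀k

theorem sum_comp_rankIn_le_of_shift {M : Type*} [AddCommGroup M] [PartialOrder M]
    [IsOrderedAddMonoid M] {Q : ℕ → M} (hQ : Monotone Q) (hY : Set.InjOn Y T)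
    (hT : ∀ i ∈ T, Y i ≤ Y' i) (hC : ∀ i ∉ T, Y' i ≤ Y i) :
    ∑ i ∈ T, Q (rankIn univ Y i) ≤ ∑ i ∈ T, Q (rankIn univ Y' i) :=
  sum_comp_le_sum_comp_of_card_filter_le hQ (card_filter_rankIn_le_of_shift hY hT hC)

end Shift

/-- for tie-free outcomes, rank statistics
T(w,Y) = a(w)·Σ w_i Q(R_i) − b(w)·Σ (1−w_i) Q(R_i), with Q non-decreasing
and a(w), b(w) ≥ 0, are effect-increasing. -/
theorem rank_statistic_effect_increasing {n : ℕ}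
    (Q : ℕ → ℝ) (hQ : Monotone Q)
    (a b : (Fin n → Bool) → ℝ)
    (ha : ∀ w, 0 ≤ a w) (hb : ∀ w, 0 ≤ b w)
    (Y0 Y1 Y0' Y1' : Fin n → ℝ)
    (h1 : ∀ i, Y1 i ≤ Y1' i) (h0 : ∀ i, Y0' i ≤ Y0 i) :
    ∀ w : Fin n → Bool,
      Function.Injective (fun i => if w i then Y1 i else Y0 i) →
      Function.Injective (fun i => if w i then Y1' i else Y0' i) →
      a w * (∑ i, if w i then Q (rankOf (fun j => if w j then Y1 j else Y0 j) i) else 0)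
        - b w * (∑ i, if w i then 0 else Q (rankOf (fun j => if w j then Y1 j else Y0 j) i))
      ≤ a w * (∑ i, if w i then Q (rankOf (fun j => if w j then Y1' j else Y0' j) i) else 0)
        - b w * (∑ i, if w i then 0 else Q (rankOf (fun j => if w j then Y1' j else Y0' j) i)) := by
  intro w hY hY'
  set Y : Fin n → ℝ := fun i => if w i then Y1 i else Y0 i
  set Y' : Fin n → ℝ := fun i => if w i then Y1' i else Y0' i
  have hsplit (f : Fin n → ℝ) :
      ∑ i, (if w i then 0 else f i) = ∑ i, f i - ∑ i ∈ {i | w i}, f i := by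
    rw [sum_filter, eq_sub_iff_add_eq, ← sum_add_distrib]
    exact sum_congr rfl fun i _ => by cases w i <;> simp
  have htreated : ∑ i ∈ {i | w i}, Q (rankOf Y i) ≤ ∑ i ∈ {i | w i}, Q (rankOf Y' i) :=
    sum_comp_rankIn_le_of_shift hQ hY.injOn (fun i hi => by simp_all [Y, Y'])
      (fun i hi => by simp_all [Y, Y'])
  have htotal : ∑ i, Q (rankOf Y i) = ∑ i, Q (rankOf Y' i) :=
    (sum_comp_rankIn Q hY.injOn).trans (sum_comp_rankIn Q hY'.injOn).symm
  rw [hsplit, hsplit, ← sum_filter, ← sum_filter, htotal]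
  gcongr a w * ?_ - b w * (_ - ?_)
  · exact ha w
  · exact hb w
end

section
/- Key step for rank statistics: suppose schedules S' ⪯ S differ only in that one treated unit k has Y'_k(1) ≤ Y_k(1) (all other potential outcomes equal). Fix an assignment w with w_k = 1 and assume no ties in observed ranks. Let G = {j : R'_j > R_j and w_j = 1} be the treated units whose ranks increase when Y_k(1) is lowered, with elements j_1,…,j_m ordered by increasing original rank. Then for any non-decreasing Q: Q(R'_k) + Σ_{a=1}^m Q(R'_{j_a}) ≤ Q(R_k) + Σ_{a=1}^m Q(R_{j_a}); that is, the sum of transformed ranks over treated units does not increase. -/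
/-!
Listing the ranks before the change as `R_{j_1}, …, R_{j_m}, R_k` and after it as
`R'_k, R'_{j_1}, …, R'_{j_m}`, the interleaving says that the second list is entrywise below
the first. Since `Q` is monotone, summing `Q` over both lists gives the inequality.
-/

namespace Fin

variable {α : Type*} [Preorder α] {m : ℕ}

theorem cons_le_snoc_of_interleave {x y : α} {f g : Fin m → α}
    (hchain : ∀ (a : Fin m) (h : (a : ℕ) + 1 < m), f a ≤ g ⟨(a : ℕ) + 1, h⟩)
    (hlast : ∀ h : 0 < m, f ⟨m - 1, Nat.sub_lt h Nat.one_pos⟩ ≤ y)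
    (hfirst : ∀ h : 0 < m, x ≤ g ⟨0, h⟩) (hxy : x ≤ y) :
    (cons x f : Fin (m + 1) → α) ≤ snoc g y := by
  intro i
  induction i using Fin.cases with
  | zero =>
    rcases m with _ | m
    · exact hxy
    · have hzero : (0 : Fin (m + 2)) = castSucc 0 := rfl
      rw [cons_zero, hzero, snoc_castSucc]
      exact hfirst m.succ_pos
  | succ a =>
    rw [cons_succ]
    by_cases h : (a : ℕ) + 1 < m
    · have hsucc : a.succ = castSucc ⟨(a : ℕ) + 1, h⟩ := rfl
      rw [hsucc, snoc_castSucc]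
      exact hchain a h
    · have hsucc : a.succ = last m := by ext; simp only [val_succ, val_last]; omega
      have ha : a = ⟨m - 1, Nat.sub_lt (by omega) Nat.one_pos⟩ := by ext; simp only; omega
      rw [hsucc, snoc_last, ha]
      exact hlast (by omega)

end Fin

/-- key step for rank statistics: when one treated unit k's
observed value is lowered, its rank can only decrease (Rk' ≤ Rk); the treated
units j_1 < … < j_m (ordered by original rank) whose ranks increase satisfy
the interleaving R'_{j_a} ≤ R_{j_{a+1}}, R'_{j_m} ≤ R_k, and R'_k ≤ R_{j_1}.
Then for any non-decreasing Q, the sum of transformed ranks over these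
treated units does not increase. -/
theorem rank_key_step (m : ℕ) (Q : ℕ → ℝ) (hQ : Monotone Q)
    (Rk Rk' : ℕ) (R R' : Fin m → ℕ)
    (hchain : ∀ (a : Fin m) (h : (a : ℕ) + 1 < m), R' a ≤ R ⟨(a : ℕ) + 1, h⟩)
    (hlast : ∀ h : 0 < m, R' ⟨m - 1, Nat.sub_lt h one_pos⟩ ≤ Rk)
    (hfirst : ∀ h : 0 < m, Rk' ≤ R ⟨0, h⟩)
    (hk : Rk' ≤ Rk) :
    Q Rk' + ∑ a, Q (R' a) ≤ Q Rk + ∑ a, Q (R a) := by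
  have hle := Fin.cons_le_snoc_of_interleave hchain hlast hfirst hk
  have hsum := Finset.sum_le_sum (s := Finset.univ) fun i _ => hQ (hle i)
  rw [Fin.sum_univ_succ, Fin.sum_univ_castSucc] at hsum
  simpa only [Fin.cons_zero, Fin.cons_succ, Fin.snoc_castSucc, Fin.snoc_last, add_comm _ (Q Rk)]
    using hsum
end

section
/- The Mann–Whitney statistic T(w, S) = Σ_{i,j} w_i (1−w_j) · I(Y_i(1) − δ ≥ Y_j(0)), with I(a ≥ b) counted as 1/2 when a = b, is effect-increasing even in the presence of ties: if S ⪯ S' then T(w, S) ≤ T(w, S') for every assignment vector w and every fixed shift δ ∈ ℝ. -/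
open Classical in
/-- The tie-adjusted indicator I(x ≥ y): 1 if x > y, 1/2 if x = y, 0 if x < y. -/
noncomputable def tieInd (x y : ℝ) : ℝ :=
  if y < x then 1 else if x = y then 1 / 2 else 0

open Finset

lemma tieInd_mono {x x' y y' : ℝ} (hx : x ≤ x') (hy : y' ≤ y) :
    tieInd x y ≤ tieInd x' y' := by
  unfold tieInd
  split_ifs <;> grind

/-- the Mann–Whitney statistic
T(w,S) = Σ_{i,j} w_i (1−w_j) I(Y_i(1) − δ ≥ Y_j(0)) (with ties counted 1/2)
is effect-increasing, even in the presence of ties. -/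
theorem mann_whitney_effect_increasing {n : ℕ} (δ : ℝ)
    (Y0 Y1 Y0' Y1' : Fin n → ℝ)
    (h1 : ∀ i, Y1 i ≤ Y1' i) (h0 : ∀ i, Y0' i ≤ Y0 i) :
    ∀ w : Fin n → Bool,
      (∑ i, ∑ j, if w i ∧ ¬ w j then tieInd (Y1 i - δ) (Y0 j) else 0)
      ≤ (∑ i, ∑ j, if w i ∧ ¬ w j then tieInd (Y1' i - δ) (Y0' j) else 0) :=
  fun w => sum_le_sum fun i _ => sum_le_sum fun j _ => by
    split_ifs
    · exact tieInd_mono (sub_le_sub_right (h1 i) δ) (h0 j)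
    · rfl
end

section
/- The Stephenson subset statistic T_S(w, S) = Σ_{G ∈ 𝒢} H_G, where 𝒢 is the collection of all size-s subsets of {1,…,n} and H_G = 1 if some treated unit i ∈ G (w_i = 1) satisfies Y_i^obs ≥ max_{j∈G} Y_j^obs and H_G = 0 otherwise, is effect-increasing (even with ties): S ⪯ S' implies T_S(w, S) ≤ T_S(w, S') for every assignment vector w. -/
/-! If a treated unit attains the maximum of a subset `G`, pick a treated unit `k` of `G` with
the largest new outcome. Treated outcomes only grew and control outcomes only shrank, so every
control outcome in `G` is now at most the old maximum, hence at most the old maximiser's new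
outcome, hence at most that of `k`. Each indicator `H_G` is therefore monotone, and so is
their sum. -/

theorem Finset.exists_mem_isMax_of_le_of_ge {ι α : Type*} [LinearOrder α] {G : Finset ι}
    {p : ι → Prop} [DecidablePred p] {y y' : ι → α}
    (hp : ∀ i, p i → y i ≤ y' i) (hnp : ∀ i, ¬ p i → y' i ≤ y i)
    (h : ∃ i ∈ G, p i ∧ ∀ j ∈ G, y j ≤ y i) :
    ∃ i ∈ G, p i ∧ ∀ j ∈ G, y' j ≤ y' i := by
  obtain ⟨i, hiG, hpi, hmax⟩ := h
  obtain ⟨k, hk, hkmax⟩ := (G.filter p).exists_max_image y' ⟨i, mem_filter.2 ⟨hiG, hpi⟩⟩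
  obtain ⟨hkG, hpk⟩ := mem_filter.1 hk
  refine ⟨k, hkG, hpk, fun j hj => ?_⟩
  by_cases hpj : p j
  · exact hkmax j (mem_filter.2 ⟨hj, hpj⟩)
  · calc y' j ≤ y j := hnp j hpj
      _ ≤ y i := hmax j hj
      _ ≤ y' i := hp i hpi
      _ ≤ y' k := hkmax i (mem_filter.2 ⟨hiG, hpi⟩)

theorem ite_one_zero_le_ite_one_zero {α : Type*} [Zero α] [One α] [Preorder α]
    [ZeroLEOneClass α] {P Q : Prop} [Decidable P] [Decidable Q] (h : P → Q) :
    (if P then (1 : α) else 0) ≤ if Q then 1 else 0 := by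
  by_cases hP : P
  · simp [hP, h hP]
  · by_cases hQ : Q <;> simp [hP, hQ]

open Finset Classical in
theorem stephenson_statistic_effect_increasing_general {n : ℕ} (s : ℕ)
    (Y0 Y1 Y0' Y1' : Fin n → ℝ)
    (h1 : ∀ i, Y1 i ≤ Y1' i) (h0 : ∀ i, Y0' i ≤ Y0 i) :
    ∀ w : Fin n → Bool,
      (∑ G ∈ (univ : Finset (Fin n)).powersetCard s,
        if ∃ i ∈ G, w i = true ∧ ∀ j ∈ G,
            (if w j then Y1 j else Y0 j) ≤ (if w i then Y1 i else Y0 i)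
        then (1 : ℝ) else 0)
      ≤ (∑ G ∈ (univ : Finset (Fin n)).powersetCard s,
        if ∃ i ∈ G, w i = true ∧ ∀ j ∈ G,
            (if w j then Y1' j else Y0' j) ≤ (if w i then Y1' i else Y0' i)
        then (1 : ℝ) else 0) := by
  intro w
  refine sum_le_sum fun G _ => ite_one_zero_le_ite_one_zero ?_
  refine exists_mem_isMax_of_le_of_ge (fun i hi => ?_) (fun i hi => ?_)
  · simpa [hi] using h1 i
  · simpa [hi] using h0 i

open Finset Classical in
/-- the Stephenson subset statistic T_S(w,S) = Σ_{G} H_G, where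
G ranges over all size-s subsets and H_G = 1 iff some treated unit in G is
(tied for) the largest observed outcome in G, is effect-increasing, even with
ties. -/
theorem stephenson_statistic_effect_increasing {n : ℕ} (s : ℕ) (hs : 2 ≤ s)
    (Y0 Y1 Y0' Y1' : Fin n → ℝ)
    (h1 : ∀ i, Y1 i ≤ Y1' i) (h0 : ∀ i, Y0' i ≤ Y0 i) :
    ∀ w : Fin n → Bool,
      (∑ G ∈ (univ : Finset (Fin n)).powersetCard s,
        if ∃ i ∈ G, w i = true ∧ ∀ j ∈ G,
            (if w j then Y1 j else Y0 j) ≤ (if w i then Y1 i else Y0 i)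
        then (1 : ℝ) else 0)
      ≤ (∑ G ∈ (univ : Finset (Fin n)).powersetCard s,
        if ∃ i ∈ G, w i = true ∧ ∀ j ∈ G,
            (if w j then Y1' j else Y0' j) ≤ (if w i then Y1' i else Y0' i)
        then (1 : ℝ) else 0) :=
  stephenson_statistic_effect_increasing_general s Y0 Y1 Y0' Y1' h1 h0
end

section
/- The studentized difference of means is not effect-increasing: there exist potential-outcome schedules S ⪯ S' and an assignment vector w such that t(w, S) > t(w, S'), where t = (Ȳ_T − Ȳ_C)/√(s²_T/n_T + s²_C/n_C) with Ȳ_T, s²_T the mean and sample variance of treated observed outcomes and Ȳ_C, s²_C those of control observed outcomes. -/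
open Finset

/-- Mean of `Y` over a finite set of units. -/
noncomputable def fmean {n : ℕ} (s : Finset (Fin n)) (Y : Fin n → ℝ) : ℝ :=
  (∑ i ∈ s, Y i) / s.card

/-- Sample variance of `Y` over a finite set of units. -/
noncomputable def svar {n : ℕ} (s : Finset (Fin n)) (Y : Fin n → ℝ) : ℝ :=
  (∑ i ∈ s, (Y i - fmean s Y) ^ 2) / (s.card - 1)

/-- The studentized difference of means
t = (Ȳ_T − Ȳ_C)/√(s²_T/n_T + s²_C/n_C). -/
noncomputable def tStat {n : ℕ} (w : Fin n → Bool) (Y0 Y1 : Fin n → ℝ) : ℝ :=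
  (fmean (univ.filter (fun i => w i = true)) Y1
      - fmean (univ.filter (fun i => w i = false)) Y0)
    / Real.sqrt
        (svar (univ.filter (fun i => w i = true)) Y1
            / (univ.filter (fun i => w i = true)).card
          + svar (univ.filter (fun i => w i = false)) Y0
            / (univ.filter (fun i => w i = false)).card)

/-!
Raising a treated outcome raises Ȳ_T − Ȳ_C, but it also inflates s²_T; once the treated spread
dominates the standard error, the second effect wins. With two treated and two control units,
t = (a + b − c − d) / √((a − b)² + (c − d)²)
for treated outcomes a, b and control outcomes c, d.
Keeping the control pair at (0, 8) and raising the treated pair from (10, 16) to (10, 25) moves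
t from 18/10 down to 27/17; the triples (6, 8, 10) and (15, 8, 17) keep both square roots rational.
-/

section TwoByTwo

variable {n : ℕ}

theorem fmean_pair {i j : Fin n} (hij : i ≠ j) (Y : Fin n → ℝ) :
    fmean {i, j} Y = (Y i + Y j) / 2 := by
  rw [fmean, sum_pair hij, card_pair hij, Nat.cast_ofNat]

theorem svar_pair {i j : Fin n} (hij : i ≠ j) (Y : Fin n → ℝ) :
    svar {i, j} Y = (Y i - Y j) ^ 2 / 2 := by
  rw [svar, sum_pair hij, fmean_pair hij, card_pair hij, Nat.cast_ofNat]
  ring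

theorem svar_pair_pos {i j : Fin n} (hij : i ≠ j) {Y : Fin n → ℝ} (hY : Y i ≠ Y j) :
    0 < svar {i, j} Y := by
  rw [svar_pair hij]
  have := sub_ne_zero.mpr hY
  positivity

theorem tStat_of_pairs {w : Fin n → Bool} {i j k l : Fin n} (hij : i ≠ j) (hkl : k ≠ l)
    (hT : univ.filter (fun u => w u = true) = {i, j})
    (hC : univ.filter (fun u => w u = false) = {k, l}) (Y0 Y1 : Fin n → ℝ) :
    tStat w Y0 Y1 =
      (Y1 i + Y1 j - (Y0 k + Y0 l)) / √((Y1 i - Y1 j) ^ 2 + (Y0 k - Y0 l) ^ 2) := by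
  rw [tStat, hT, hC, fmean_pair hij, fmean_pair hkl, svar_pair hij, svar_pair hkl,
    card_pair hij, card_pair hkl, Nat.cast_ofNat]
  have hquarter : (Y1 i - Y1 j) ^ 2 / 2 / 2 + (Y0 k - Y0 l) ^ 2 / 2 / 2
      = ((Y1 i - Y1 j) ^ 2 + (Y0 k - Y0 l) ^ 2) / 2 ^ 2 := by ring
  rw [hquarter, Real.sqrt_div' _ (by positivity), Real.sqrt_sq (by norm_num)]
  ring

end TwoByTwo

/-- the studentized difference of means is not
effect-increasing: there exist schedules S ⪯ S' (with at least two treated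
and two control units and positive sample variances) and an assignment w
with t(w, S) > t(w, S'). -/
theorem studentized_t_not_effect_increasing :
    ∃ (n : ℕ) (w : Fin n → Bool) (Y0 Y1 Y0' Y1' : Fin n → ℝ),
      (∀ i, Y1 i ≤ Y1' i) ∧ (∀ i, Y0' i ≤ Y0 i) ∧
      2 ≤ (univ.filter (fun i => w i = true)).card ∧
      2 ≤ (univ.filter (fun i => w i = false)).card ∧
      0 < svar (univ.filter (fun i => w i = true)) Y1 ∧
      0 < svar (univ.filter (fun i => w i = false)) Y0 ∧
      0 < svar (univ.filter (fun i => w i = true)) Y1' ∧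
      0 < svar (univ.filter (fun i => w i = false)) Y0' ∧
      tStat w Y0' Y1' < tStat w Y0 Y1 := by
  let w : Fin 4 → Bool := ![true, true, false, false]
  have hT : univ.filter (fun u => w u = true) = {0, 1} := by decide
  have hC : univ.filter (fun u => w u = false) = {2, 3} := by decide
  refine ⟨4, w, ![0, 0, 0, 8], ![10, 16, 0, 0], ![0, 0, 0, 8], ![10, 25, 0, 0], ?_,
    fun _ => le_rfl, ?_, ?_, ?_, ?_, ?_, ?_, ?_⟩
  · intro i; fin_cases i <;> norm_num
  · rw [hT]; decide
  · rw [hC]; decide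
  · rw [hT]; exact svar_pair_pos (by decide) (by norm_num)
  · rw [hC]; exact svar_pair_pos (by decide) (by simp)
  · rw [hT]; exact svar_pair_pos (by decide) (by norm_num)
  · rw [hC]; exact svar_pair_pos (by decide) (by simp)
  rw [tStat_of_pairs (by decide) (by decide) hT hC, tStat_of_pairs (by decide) (by decide) hT hC]
  norm_num [Matrix.cons_val_two, Matrix.cons_val_three]
end
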